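/- arXiv:2101.05125 — 4 statements merged into one kernel-verified Lean document; each statement's English description precedes it below -/
import Mathlib

section
/- Let P be a partially ordered set in which every chain (including the empty chain) has a least upper bound in P. Then every directed subset of P has a least upper bound in P; that is, P is a CPO if and only if every chain of P has a least upper bound in P. -/
open Set Cardinal

universe u

/-- Every finite subset of a nonempty directed set has an upper bound in the set. -/
lemma aux_finset_bound {P : Type u} [PartialOrder P] {D : Set P} (hne : D.Nonempty)
    (hdir : DirectedOn (· ≤ ·) D) (t : Finset P) (ht : ↑t ⊆ D) :
    ∃ z ∈ D, ∀ x ∈ t, x ≤ z := by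
  classical
  induction t using Finset.induction with
  | empty => exact ⟨hne.choose, hne.choose_spec, by simp⟩
  | @insert a s ha IH =>
    have hsub : (↑s : Set P) ⊆ D := by
      intro x hx; exact ht (by simpa using Or.inr hx)
    obtain ⟨z, hzD, hz⟩ := IH hsub
    have haD : a ∈ D := ht (by simp)
    obtain ⟨w, hwD, haw, hzw⟩ := hdir a haD z hzD
    refine ⟨w, hwD, ?_⟩
    intro x hx
    rcases Finset.mem_insert.mp hx with rfl | hx
    · exact haw
    · exact (hz x hx).trans hzw

/-- Directed closure of controlled cardinality. -/
lemma aux_directed_closure {P : Type u} [PartialOrder P] {D : Set P}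
    (hdir : DirectedOn (· ≤ ·) D) {S : Set P} (hS : S ⊆ D) (hne : S.Nonempty) :
    ∃ E : Set P, S ⊆ E ∧ E ⊆ D ∧ DirectedOn (· ≤ ·) E ∧ #E ≤ max #S ℵ₀ := by
  classical
  have hu : ∀ a b : P, ∃ z : P, a ∈ D → b ∈ D → z ∈ D ∧ a ≤ z ∧ b ≤ z := by
    intro a b
    by_cases h : a ∈ D ∧ b ∈ D
    · obtain ⟨z, hz, h1, h2⟩ := hdir a h.1 b h.2
      exact ⟨z, fun _ _ => ⟨hz, h1, h2⟩⟩
    · exact ⟨hne.choose, fun h1 h2 => absurd ⟨h1, h2⟩ h⟩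
  choose u hu using hu
  set F : ℕ → Set P := fun n => Nat.rec S (fun _ Fn => Fn ∪ Set.image2 u Fn Fn) n with hF
  have hFsucc : ∀ n, F (n + 1) = F n ∪ Set.image2 u (F n) (F n) := fun n => rfl
  have hmono : ∀ m n, m ≤ n → F m ⊆ F n := by
    intro m n h
    induction n with
    | zero => simpa [Nat.le_zero.mp h] using Subset.rfl
    | succ n IH =>
      rcases Nat.le_succ_iff.mp h with h | h
      · exact (IH h).trans (by rw [hFsucc]; exact subset_union_left)
      · simp [h]
  have hFD : ∀ n, F n ⊆ D := by
    intro n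
    induction n with
    | zero => exact hS
    | succ n IH =>
      rw [hFsucc]
      rintro x (hx | hx)
      · exact IH hx
      · obtain ⟨a, ha, b, hb, rfl⟩ := hx
        exact (hu a b (IH ha) (IH hb)).1
  set μ := max #S ℵ₀ with hμ
  have hμinf : ℵ₀ ≤ μ := le_max_right _ _
  have hcard : ∀ n, #(F n) ≤ μ := by
    intro n
    induction n with
    | zero => exact le_max_left _ _
    | succ n IH =>
      rw [hFsucc]
      calc #(↑(F n ∪ Set.image2 u (F n) (F n))) ≤ #(F n) + #(Set.image2 u (F n) (F n)) :=
            mk_union_le _ _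
        _ ≤ μ + #(F n) * #(F n) := by
            gcongr
            exact Cardinal.mk_image2_le
        _ ≤ μ + μ * μ := by gcongr
        _ = μ := by rw [Cardinal.mul_eq_self hμinf, Cardinal.add_eq_self hμinf]
  refine ⟨⋃ n, F n, ?_, ?_, ?_, ?_⟩
  · exact subset_iUnion F 0
  · exact iUnion_subset hFD
  · rintro a ha b hb
    obtain ⟨m, hm⟩ := mem_iUnion.mp ha
    obtain ⟨n, hn⟩ := mem_iUnion.mp hb
    have ham : a ∈ F (max m n) := hmono m _ (le_max_left _ _) hm
    have hbn : b ∈ F (max m n) := hmono n _ (le_max_right _ _) hn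
    have : u a b ∈ F (max m n + 1) := by
      rw [hFsucc]; exact Or.inr (mem_image2_of_mem ham hbn)
    obtain ⟨_, h1, h2⟩ := hu a b (hFD _ ham) (hFD _ hbn)
    exact ⟨u a b, mem_iUnion.mpr ⟨max m n + 1, this⟩, h1, h2⟩
  · have huni : (⋃ n, F n) = ⋃ n : ULift.{u} ℕ, F n.down := by
      ext x
      simp only [mem_iUnion]
      exact ⟨fun ⟨n, h⟩ => ⟨⟨n⟩, h⟩, fun ⟨n, h⟩ => ⟨n.down, h⟩⟩
    rw [huni]
    calc #(⋃ n : ULift.{u} ℕ, F n.down) ≤ Cardinal.sum fun n : ULift.{u} ℕ => #(F n.down) :=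
          Cardinal.mk_iUnion_le_sum_mk
      _ ≤ Cardinal.sum fun _ : ULift.{u} ℕ => μ := Cardinal.sum_le_sum _ _ fun n => hcard n.down
      _ = #(ULift.{u} ℕ) * μ := Cardinal.sum_const' _ _
      _ ≤ μ * μ := by
          gcongr
          simpa using hμinf
      _ = μ := Cardinal.mul_eq_self hμinf

lemma aux_directed_lub {P : Type u} [PartialOrder P]
    (h : ∀ C : Set P, IsChain (· ≤ ·) C → ∃ x, IsLUB C x) :
    ∀ D : Set P, D.Nonempty → DirectedOn (· ≤ ·) D → ∃ x, IsLUB D x := by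
  classical
  suffices key : ∀ κ : Cardinal.{u}, ∀ D : Set P, #D = κ → D.Nonempty →
      DirectedOn (· ≤ ·) D → ∃ x, IsLUB D x from fun D hne hdir => key _ D rfl hne hdir
  intro κ
  apply WellFoundedLT.induction κ
  intro κ IH D hκ hne hdir
  by_cases hfin : D.Finite
  · -- finite case: greatest element
    obtain ⟨z, hzD, hz⟩ := aux_finset_bound hne hdir hfin.toFinset (by simp)
    exact ⟨z, ⟨fun d hd => hz d (hfin.mem_toFinset.mpr hd), fun b hb => hb hzD⟩⟩
  have hinf : ℵ₀ ≤ κ := by haveI := Set.infinite_coe_iff.mpr hfin; exact hκ ▸ Cardinal.aleph0_le_mk ↥D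
  by_cases hcnt : κ = ℵ₀
  · -- countably infinite case: cofinal chain
    have hct : D.Countable := by
      rw [← Set.countable_coe_iff, ← Cardinal.mk_le_aleph0_iff, hκ, hcnt]
    obtain ⟨f, hf⟩ := (Set.countable_iff_exists_surjective hne).mp hct
    have hu : ∀ a b : P, ∃ z : P, a ∈ D → b ∈ D → z ∈ D ∧ a ≤ z ∧ b ≤ z := by
      intro a b
      by_cases hab : a ∈ D ∧ b ∈ D
      · obtain ⟨z, hz, h1, h2⟩ := hdir a hab.1 b hab.2
        exact ⟨z, fun _ _ => ⟨hz, h1, h2⟩⟩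
      · exact ⟨hne.choose, fun h1 h2 => absurd ⟨h1, h2⟩ hab⟩
    choose u hu using hu
    set c : ℕ → P := fun n => Nat.rec (f 0 : P) (fun n cn => u cn (f (n + 1))) n with hc
    have hcD : ∀ n, c n ∈ D ∧ (f n : P) ≤ c n ∧ c n ≤ c (n + 1) := by
      intro n
      induction n with
      | zero =>
        have := hu (c 0) (f 1) (f 0).2 (f 1).2
        exact ⟨(f 0).2, le_refl _, this.2.1⟩
      | succ n IHn =>
        have h1 := hu (c n) (f (n + 1)) IHn.1 (f (n + 1)).2
        have h2 := hu (c (n + 1)) (f (n + 2)) h1.1 (f (n + 2)).2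
        exact ⟨h1.1, h1.2.2, h2.2.1⟩
    have hmono : Monotone c := monotone_nat_of_le_succ fun n => (hcD n).2.2
    obtain ⟨x, hx⟩ := h (Set.range c) hmono.isChain_range
    refine ⟨x, ⟨fun d hd => ?_, fun b hb => ?_⟩⟩
    · obtain ⟨n, hn⟩ := hf ⟨d, hd⟩
      have h2 := (hcD n).2.1
      rw [hn] at h2
      exact h2.trans (hx.1 ⟨n, rfl⟩)
    · exact hx.2 fun y ⟨n, hn⟩ => hn ▸ hb (hcD n).1
  -- uncountable case: transfinite nested directed family
  have hℵ : ℵ₀ < κ := lt_of_le_of_ne hinf fun hh => hcnt hh.symm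
  set ι := κ.ord.ToType with hι
  have hmkι : #ι = κ := Cardinal.mk_ord_toType κ
  obtain ⟨e⟩ : Nonempty (ι ≃ ↥D) := by rw [← Cardinal.eq, hmkι, hκ]
  have hcl' : ∀ S : Set P, ∃ E : Set P, S ⊆ D → S.Nonempty →
      (S ⊆ E ∧ E ⊆ D ∧ DirectedOn (· ≤ ·) E ∧ #E ≤ max #S ℵ₀) := by
    intro S
    by_cases hs : S ⊆ D ∧ S.Nonempty
    · obtain ⟨E, h1, h2, h3, h4⟩ := aux_directed_closure hdir hs.1 hs.2
      exact ⟨E, fun _ _ => ⟨h1, h2, h3, h4⟩⟩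
    · exact ⟨∅, fun h1 h2 => absurd ⟨h1, h2⟩ hs⟩
  choose cl hcl using hcl'
  set g : ι → P := fun i => (e i : P) with hg
  obtain ⟨E, hEeq⟩ : ∃ E : ι → Set P,
      ∀ i, E i = cl (g '' Set.Iic i ∪ ⋃ j, ⋃ _ : j < i, E j) :=
    ⟨(wellFounded_lt (α := ι)).fix
        (fun i F => cl (g '' Set.Iic i ∪ ⋃ j, ⋃ hj : j < i, F j hj)),
      fun i => WellFounded.fix_eq _ _ i⟩
  have hmain : ∀ i : ι, (E i ⊆ D ∧ DirectedOn (· ≤ ·) (E i)) ∧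
      (g '' Set.Iic i ∪ ⋃ j, ⋃ _ : j < i, E j) ⊆ E i ∧
      #(E i) ≤ max #(Set.Iic i) ℵ₀ := by
    intro i
    apply WellFoundedLT.induction i
    intro i IH2
    set A := g '' Set.Iic i ∪ ⋃ j, ⋃ _ : j < i, E j with hA
    have hAD : A ⊆ D := by
      rintro x (⟨j, _, rfl⟩ | hx)
      · exact (e j).2
      · simp only [Set.mem_iUnion] at hx
        obtain ⟨j, hj, hx⟩ := hx
        exact (IH2 j hj).1.1 hx
    have hAne : A.Nonempty := ⟨g i, Or.inl ⟨i, Set.mem_Iic.mpr le_rfl, rfl⟩⟩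
    obtain ⟨h1, h2, h3, h4⟩ := hcl A hAD hAne
    rw [← hEeq i] at h1 h2 h3 h4
    set μ := max #(Set.Iic i) ℵ₀ with hμ
    have hμinf : ℵ₀ ≤ μ := le_max_right _ _
    have hiio : #(Set.Iio i) ≤ μ :=
      (Cardinal.mk_le_mk_of_subset Set.Iio_subset_Iic_self).trans (le_max_left _ _)
    have hunion : (⋃ j, ⋃ _ : j < i, E j) = ⋃ j : ↥(Set.Iio i), E ↑j := by
      ext x
      simp only [Set.mem_iUnion]
      exact ⟨fun ⟨j, hj, hx⟩ => ⟨⟨j, hj⟩, hx⟩, fun ⟨⟨j, hj⟩, hx⟩ => ⟨j, hj, hx⟩⟩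
    have hAcard : #A ≤ μ := by
      calc #A ≤ #(g '' Set.Iic i) + #(⋃ j, ⋃ _ : j < i, E j) := Cardinal.mk_union_le _ _
        _ ≤ μ + μ * μ := by
            gcongr
            · exact (Cardinal.mk_image_le).trans (le_max_left _ _)
            · rw [hunion]
              calc #(⋃ j : ↥(Set.Iio i), E ↑j)
                  ≤ Cardinal.sum fun j : ↥(Set.Iio i) => #(E ↑j) :=
                    Cardinal.mk_iUnion_le_sum_mk
                _ ≤ Cardinal.sum fun _ : ↥(Set.Iio i) => μ := by
                    refine Cardinal.sum_le_sum _ _ fun j => ?_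
                    refine (IH2 j j.2).2.2.trans (max_le ?_ hμinf)
                    exact (Cardinal.mk_le_mk_of_subset
                      (Set.Iic_subset_Iic.mpr j.2.le)).trans (le_max_left _ _)
                _ = #(↥(Set.Iio i)) * μ := Cardinal.sum_const' _ _
                _ ≤ μ * μ := by gcongr
        _ = μ := by rw [Cardinal.mul_eq_self hμinf, Cardinal.add_eq_self hμinf]
    exact ⟨⟨h2, h3⟩, h1, h4.trans (max_le hAcard hμinf)⟩
  have hElt : ∀ i, #(E i) < κ := by
    intro i
    refine ((hmain i).2.2).trans_lt (max_lt ?_ hℵ)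
    have : #(Set.Iic i) ≤ #(Set.Iio i) + 1 := by
      refine (Cardinal.mk_le_mk_of_subset (s := Set.Iic i) (t := insert i (Set.Iio i))
        fun x hx => ?_).trans Cardinal.mk_insert_le
      rcases eq_or_lt_of_le (Set.mem_Iic.mp hx) with h' | h'
      · exact Or.inl h'
      · exact Or.inr h'
    exact this.trans_lt (Cardinal.add_lt_of_lt hinf (Cardinal.mk_Iio_ord_toType i)
      (lt_of_lt_of_le Cardinal.one_lt_aleph0 hinf))
  have hEne : ∀ i, (E i).Nonempty :=
    fun i => ⟨g i, (hmain i).2.1 (Or.inl ⟨i, Set.mem_Iic.mpr le_rfl, rfl⟩)⟩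
  have hs : ∀ i, ∃ s, IsLUB (E i) s :=
    fun i => IH _ (hElt i) (E i) rfl (hEne i) (hmain i).1.2
  choose s hs using hs
  have hEmono : ∀ {i i' : ι}, i ≤ i' → E i ⊆ E i' := by
    intro i i' hii
    rcases eq_or_lt_of_le hii with rfl | hlt
    · exact Set.Subset.rfl
    · intro x hx
      exact (hmain i').2.1 (Or.inr (Set.mem_iUnion.mpr ⟨i, Set.mem_iUnion.mpr ⟨hlt, hx⟩⟩))
  have hsmono : Monotone s := by
    intro i i' hii
    exact (hs i).2 fun y hy => (hs i').1 (hEmono hii hy)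
  obtain ⟨x, hx⟩ := h (Set.range s) hsmono.isChain_range
  refine ⟨x, ⟨fun d hd => ?_, fun b hb => ?_⟩⟩
  · set i := e.symm ⟨d, hd⟩ with hi
    have hgi : g i = d := by rw [hg]; simp [hi]
    have hdE : d ∈ E i := (hmain i).2.1 (Or.inl ⟨i, Set.mem_Iic.mpr le_rfl, hgi⟩)
    exact ((hs i).1 hdE).trans (hx.1 ⟨i, rfl⟩)
  · exact hx.2 fun y ⟨i, hi⟩ => hi ▸ (hs i).2 fun z hz => hb ((hmain i).1.1 hz)

/-- in a poset in which every chain (including the empty chain) has a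
least upper bound, every directed subset has a least upper bound; that is, P is a CPO
(has a bottom element and joins of all directed subsets) if and only if every chain
of P has a least upper bound in P. -/
theorem stmt8 {P : Type*} [PartialOrder P] :
    ((∀ C : Set P, IsChain (· ≤ ·) C → ∃ x, IsLUB C x) →
      ∀ D : Set P, D.Nonempty → DirectedOn (· ≤ ·) D → ∃ x, IsLUB D x) ∧
    (((∃ b : P, ∀ x, b ≤ x) ∧
        ∀ D : Set P, D.Nonempty → DirectedOn (· ≤ ·) D → ∃ x, IsLUB D x) ↔
      ∀ C : Set P, IsChain (· ≤ ·) C → ∃ x, IsLUB C x) := by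
  refine ⟨aux_directed_lub, ⟨?_, ?_⟩⟩
  · rintro ⟨⟨b, hb⟩, hd⟩ C hC
    rcases C.eq_empty_or_nonempty with rfl | hne
    · exact ⟨b, ⟨fun x hx => absurd hx (Set.notMem_empty x), fun x _ => hb x⟩⟩
    · exact hd C hne hC.directedOn
  · intro hch
    refine ⟨?_, aux_directed_lub hch⟩
    obtain ⟨b, hb⟩ := hch ∅ (by simp [IsChain])
    exact ⟨b, fun x => hb.2 fun y hy => absurd hy (Set.notMem_empty y)⟩
end

section
/- Let Feat be a set and let F and F' be partial maps from Feat to nonempty closed intervals of ℝ, ordered by the extended subsumption order. Then the greatest lower bound F ⊓ F' of F and F' exists and is the partial map G with dom G = dom F ∩ dom F' such that, for f ∈ dom G with F(f) = Icc a₁ b₁ and F'(f) = Icc a₂ b₂, G(f) = Icc (min a₁ a₂) (max b₁ b₂). In particular, if dom F ∩ dom F' = ∅ then F ⊓ F' is the empty partial map (the universal concept). -/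
/-- A nonempty closed interval of ℝ, given by its endpoints `a ≤ b`. -/
abbrev Ival : Type := {p : ℝ × ℝ // p.1 ≤ p.2}

/-- The set of reals in the interval. -/
def IccSet (I : Ival) : Set ℝ := Set.Icc I.1.1 I.1.2

/-- The extended subsumption order on partial maps from features to nonempty closed
intervals: `F ≤ G` iff `dom F ⊆ dom G` and `G(f) ⊆ F(f)` (reverse inclusion of
intervals) for all `f ∈ dom F`. -/
def fsub {Feat : Type*} (F G : Feat → Option Ival) : Prop :=
  (∀ f, F f ≠ none → G f ≠ none) ∧
  ∀ f I J, F f = some I → G f = some J → IccSet J ⊆ IccSet I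

def hull (I I' : Ival) : Ival :=
  ⟨(min I.1.1 I'.1.1, max I.1.2 I'.1.2),
    le_trans (min_le_left _ _) (le_trans I.2 (le_max_left _ _))⟩


/-- the greatest lower bound `F ⊓ F'` of two partial maps to intervals
exists and is the partial map `G` with `dom G = dom F ∩ dom F'` whose value at `f`,
when `F f = Icc a₁ b₁` and `F' f = Icc a₂ b₂`, is `Icc (min a₁ a₂) (max b₁ b₂)`; in
particular, if `dom F ∩ dom F' = ∅` then `F ⊓ F'` is the empty partial map. -/
theorem stmt12 {Feat : Type*} (F F' : Feat → Option Ival) :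
    ∃ G : Feat → Option Ival,
      -- dom G = dom F ∩ dom F'
      (∀ f, G f ≠ none ↔ (F f ≠ none ∧ F' f ≠ none)) ∧
      -- values are the convex hulls (min of left endpoints, max of right endpoints)
      (∀ f I I' J, F f = some I → F' f = some I' → G f = some J →
        J.1.1 = min I.1.1 I'.1.1 ∧ J.1.2 = max I.1.2 I'.1.2) ∧
      -- G is a lower bound
      fsub G F ∧ fsub G F' ∧
      -- G is greatest among lower bounds
      (∀ H : Feat → Option Ival, fsub H F → fsub H F' → fsub H G) ∧
      -- in particular, disjoint domains give the empty partial map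
      ((∀ f, ¬(F f ≠ none ∧ F' f ≠ none)) → G = fun _ => none) := by
  refine ⟨fun f => (F f).bind fun I => (F' f).map fun I' => hull I I', ?_, ?_, ?_, ?_, ?_, ?_⟩
  · intro f
    cases hF : F f <;> cases hF' : F' f <;> simp [hF, hF']
  · intro f I I' J hF hF' hG
    simp [hF, hF'] at hG
    subst hG
    exact ⟨rfl, rfl⟩
  · refine ⟨fun f h => ?_, fun f I J hG hF => ?_⟩
    · cases hF : F f
      · simp [hF] at h
      · simp [hF]
    · cases hF' : F' f with
      | none => simp [hF, hF'] at hG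
      | some I' =>
        simp [hF, hF'] at hG
        subst hG
        exact Set.Icc_subset_Icc (min_le_left _ _) (le_max_left _ _)
  · refine ⟨fun f h => ?_, fun f I J hG hF' => ?_⟩
    · cases hF' : F' f
      · cases hF : F f <;> simp [hF, hF'] at h
      · simp [hF']
    · cases hF : F f with
      | none => simp [hF] at hG
      | some I' =>
        simp [hF, hF'] at hG
        subst hG
        exact Set.Icc_subset_Icc (min_le_right _ _) (le_max_right _ _)
  · rintro H ⟨hd1, hv1⟩ ⟨hd2, hv2⟩
    refine ⟨fun f h => ?_, fun f J K hH hG => ?_⟩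
    · have h1 := hd1 f h
      have h2 := hd2 f h
      cases hF : F f with
      | none => exact absurd hF h1
      | some I =>
        cases hF' : F' f with
        | none => exact absurd hF' h2
        | some I' => simp [hF, hF']
    · cases hF : F f with
      | none => simp [hF] at hG
      | some I =>
        cases hF' : F' f with
        | none => simp [hF, hF'] at hG
        | some I' =>
          simp [hF, hF'] at hG
          subst hG
          have s1 := (Set.Icc_subset_Icc_iff I.2).mp (hv1 f J I hH hF)
          have s2 := (Set.Icc_subset_Icc_iff I'.2).mp (hv2 f J I' hH hF')
          exact Set.Icc_subset_Icc (le_min s1.1 s2.1) (max_le s1.2 s2.2)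
  · intro h
    funext f
    have := h f
    cases hF : F f <;> cases hF' : F' f <;> simp [hF, hF'] at this ⊢
end

section
/- Let Feat be a set and let F and F' be partial maps from Feat to nonempty closed intervals of ℝ, ordered by the extended subsumption order. Suppose that for every f ∈ dom F ∩ dom F' the intervals F(f) and F'(f) have nonempty intersection. Then the least upper bound F ⊔ F' of F and F' exists and is the partial map G with dom G = dom F ∪ dom F' given by: G(f) = F(f) for f ∈ dom F \ dom F', G(f) = F'(f) for f ∈ dom F' \ dom F, and G(f) = F(f) ∩ F'(f) for f ∈ dom F ∩ dom F'. -/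
/-! The join `F ⊔ F'` is computed featurewise: on each feature it is the join of two
partial values, where the join of two intervals is their intersection. The overlap
hypothesis is exactly what keeps this intersection nonempty, so that the join is defined
wherever `F` or `F'` is. -/

def OptSub (a b : Option Ival) : Prop :=
  (a ≠ none → b ≠ none) ∧ ∀ I J, a = some I → b = some J → IccSet J ⊆ IccSet I

def Compatible (a b : Option Ival) : Prop :=
  ∀ I J, a = some I → b = some J → (IccSet I ∩ IccSet J).Nonempty

noncomputable def ivalInter (I J : Ival) : Option Ival :=
  if h : max I.1.1 J.1.1 ≤ min I.1.2 J.1.2 then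
    some ⟨(max I.1.1 J.1.1, min I.1.2 J.1.2), h⟩
  else none

noncomputable def optJoin : Option Ival → Option Ival → Option Ival
  | some I, some J => ivalInter I J
  | a, none => a
  | none, b => b

theorem fsub_iff_forall_optSub {Feat : Type*} {F G : Feat → Option Ival} :
    fsub F G ↔ ∀ f, OptSub (F f) (G f) := by
  simp only [fsub, OptSub, forall_and]

theorem IccSet_inter_nonempty_iff (I J : Ival) :
    (IccSet I ∩ IccSet J).Nonempty ↔ max I.1.1 J.1.1 ≤ min I.1.2 J.1.2 := by
  rw [IccSet, IccSet, Set.Icc_inter_Icc, Set.nonempty_Icc]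

theorem ivalInter_ne_none {I J : Ival} (h : (IccSet I ∩ IccSet J).Nonempty) :
    ivalInter I J ≠ none := by
  rw [IccSet_inter_nonempty_iff] at h
  simp [ivalInter, h]

theorem IccSet_of_ivalInter_eq_some {I J K : Ival} (h : ivalInter I J = some K) :
    IccSet K = IccSet I ∩ IccSet J := by
  unfold ivalInter at h
  split_ifs at h
  cases h
  simp only [IccSet, Set.Icc_inter_Icc]

section optJoin

variable {a b c : Option Ival}

@[simp] theorem optJoin_some_none (I : Ival) : optJoin (some I) none = some I := rfl

@[simp] theorem optJoin_none_left (b : Option Ival) : optJoin none b = b := by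
  cases b <;> rfl

theorem optJoin_ne_none_iff (hab : Compatible a b) :
    optJoin a b ≠ none ↔ a ≠ none ∨ b ≠ none := by
  cases a with
  | none => simp
  | some I =>
    cases b with
    | none => simp
    | some J => simpa [optJoin] using ivalInter_ne_none (hab I J rfl rfl)

theorem optSub_none_left (b : Option Ival) : OptSub none b := by
  simp [OptSub]

theorem optSub_refl (a : Option Ival) : OptSub a a :=
  ⟨id, fun _ _ hI hJ => by rw [Option.some.inj (hI.symm.trans hJ)]⟩

theorem optSub_some_ivalInter {I J : Ival} (h : (IccSet I ∩ IccSet J).Nonempty) :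
    OptSub (some I) (ivalInter I J) ∧ OptSub (some J) (ivalInter I J) := by
  have hne := ivalInter_ne_none h
  refine ⟨⟨fun _ => hne, ?_⟩, ⟨fun _ => hne, ?_⟩⟩ <;>
  · rintro _ K ⟨⟩ hK
    simp [IccSet_of_ivalInter_eq_some hK]

theorem optSub_optJoin_left (hab : Compatible a b) : OptSub a (optJoin a b) := by
  cases a with
  | none => exact optSub_none_left _
  | some I =>
    cases b with
    | none => exact optSub_refl _
    | some J => exact (optSub_some_ivalInter (hab I J rfl rfl)).1

theorem optSub_optJoin_right (hab : Compatible a b) : OptSub b (optJoin a b) := by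
  cases b with
  | none => exact optSub_none_left _
  | some J =>
    cases a with
    | none => exact optSub_refl _
    | some I => exact (optSub_some_ivalInter (hab I J rfl rfl)).2

theorem optJoin_optSub (ha : OptSub a c) (hb : OptSub b c) : OptSub (optJoin a b) c := by
  cases a with
  | none => simpa using hb
  | some I =>
    cases b with
    | none => exact ha
    | some J =>
      refine ⟨fun _ => ha.1 (Option.some_ne_none I), fun K L hK hL => ?_⟩
      rw [IccSet_of_ivalInter_eq_some hK]
      exact Set.subset_inter (ha.2 I L rfl hL) (hb.2 J L rfl hL)

end optJoin

/-- if for every shared feature the values of `F` and `F'` overlap, then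
the least upper bound `F ⊔ F'` exists and is the partial map `G` with
`dom G = dom F ∪ dom F'` taking the value of the defined map where only one is defined,
and the intersection of the two intervals on shared features. -/
theorem stmt13 {Feat : Type*} (F F' : Feat → Option Ival)
    (hov : ∀ f I I', F f = some I → F' f = some I' → (IccSet I ∩ IccSet I').Nonempty) :
    ∃ G : Feat → Option Ival,
      -- dom G = dom F ∪ dom F'
      (∀ f, G f ≠ none ↔ (F f ≠ none ∨ F' f ≠ none)) ∧
      -- G agrees with F where only F is defined
      (∀ f I, F f = some I → F' f = none → G f = some I) ∧
      -- G agrees with F' where only F' is defined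
      (∀ f I', F' f = some I' → F f = none → G f = some I') ∧
      -- on shared features, G is the intersection of the intervals
      (∀ f I I' J, F f = some I → F' f = some I' → G f = some J →
        IccSet J = IccSet I ∩ IccSet I') ∧
      -- G is an upper bound
      fsub F G ∧ fsub F' G ∧
      -- G is least among upper bounds
      ∀ H : Feat → Option Ival, fsub F H → fsub F' H → fsub G H := by
  refine ⟨fun f => optJoin (F f) (F' f), fun f => optJoin_ne_none_iff (hov f),
    fun f I hI hI' => by simp [hI, hI'], fun f I' hI' hI => by simp [hI, hI'],
    fun f I I' J hI hI' hJ => ?_, ?_, ?_, fun H hH hH' => ?_⟩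
  · simp only [hI, hI', optJoin] at hJ
    exact IccSet_of_ivalInter_eq_some hJ
  · exact fsub_iff_forall_optSub.2 fun f => optSub_optJoin_left (hov f)
  · exact fsub_iff_forall_optSub.2 fun f => optSub_optJoin_right (hov f)
  · rw [fsub_iff_forall_optSub] at hH hH' ⊢
    exact fun f => optJoin_optSub (hH f) (hH' f)
end

section
/- Let Feat be a set and consider the partial maps from Feat to nonempty closed intervals of ℝ, ordered by the extended subsumption order. A partial map F is a maximal element of this order if and only if F is total (dom F = Feat) and every value F(f) is a singleton interval Icc x x; that is, the maximal elements are exactly the instances, the points of ℝ^Feat. -/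
/-- a partial map from features to nonempty closed intervals is a
maximal element of the extended subsumption order iff it is total and all its values
are singleton intervals `Icc x x`; i.e., the maximal elements are exactly the
instances, the points of `ℝ^Feat`. -/
theorem stmt17 {Feat : Type*} (F : Feat → Option Ival) :
    (∀ G : Feat → Option Ival, fsub F G → F = G) ↔
    ((∀ f, F f ≠ none) ∧ ∀ f I, F f = some I → ∃ x : ℝ, I.1 = (x, x)) := by
  classical
  constructor
  · intro hmax
    constructor
    · intro f hf
      set G := Function.update F f (some ⟨(0, 0), le_refl 0⟩) with hG
      have hsub : fsub F G := by
        constructor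
        · intro g hg
          by_cases h : g = f
          · subst h; simp [hG, Function.update_self]
          · simpa [hG, Function.update_of_ne h] using hg
        · intro g I J hI hJ
          by_cases h : g = f
          · subst h; rw [hf] at hI; cases hI
          · rw [hG, Function.update_of_ne h] at hJ
            rw [hI] at hJ; cases hJ; exact subset_rfl
      have := hmax G hsub
      have : F f = G f := by rw [this]
      rw [hG, Function.update_self] at this
      simp [this] at hf
    · intro f I hI
      refine ⟨I.1.1, ?_⟩
      by_contra hne
      set G := Function.update F f (some ⟨(I.1.1, I.1.1), le_refl _⟩) with hG
      have hsub : fsub F G := by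
        constructor
        · intro g hg
          by_cases h : g = f
          · subst h; simp [hG, Function.update_self]
          · simpa [hG, Function.update_of_ne h] using hg
        · intro g I' J hI' hJ
          by_cases h : g = f
          · subst h
            rw [hI] at hI'; cases hI'
            rw [hG, Function.update_self] at hJ; cases hJ
            intro x hx
            simp only [IccSet, Set.mem_Icc] at hx ⊢
            exact ⟨hx.1, hx.2.trans I.2⟩
          · rw [hG, Function.update_of_ne h] at hJ
            rw [hI'] at hJ; cases hJ; exact subset_rfl
      have heq := hmax G hsub
      have : F f = G f := by rw [heq]
      rw [hG, Function.update_self, hI] at this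
      exact hne (congrArg Subtype.val (Option.some.inj this))
  · rintro ⟨htot, hsing⟩ G ⟨hdom, hsub⟩
    funext f
    obtain ⟨I, hI⟩ := Option.ne_none_iff_exists'.mp (htot f)
    obtain ⟨x, hx⟩ := hsing f I hI
    obtain ⟨J, hJ⟩ := Option.ne_none_iff_exists'.mp (hdom f (htot f))
    have hJI := hsub f I J hI hJ
    have h1 : J.1.1 ∈ IccSet I := hJI ⟨le_refl _, J.2⟩
    have h2 : J.1.2 ∈ IccSet I := hJI ⟨J.2, le_refl _⟩
    simp only [IccSet, hx, Set.mem_Icc] at h1 h2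
    have : J.1 = (x, x) := Prod.ext (le_antisymm h1.2 h1.1) (le_antisymm h2.2 h2.1)
    rw [hI, hJ]
    congr 1
    exact Subtype.ext ((this.trans hx.symm).symm)
end
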